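/- In the quantum matrix algebra M(R,F), the matrix of generators M satisfies R_k · M_{k̄} · M_{k̄+1} = M_{k̄} · M_{k̄+1} · R_k for all k ≥ 1, where M_{1̄} := M ⊗ Id^{⊗(k-1)} and M_{k̄+1} := F_k M_{k̄} F_k^{-1}. -/
import Mathlib


open scoped BigOperators

/-- An operator on `V ⊗ V` (`V = ℂ^N`): `X_{ij}^{kl} = X (k,l) (i,j)`. -/
abbrev TwoSiteOp (N : ℕ) := Matrix (Fin N × Fin N) (Fin N × Fin N) ℂ

/-- `X_p`: the operator `X ∈ End(V⊗V)` acting on the tensor factors `p, p+1`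
(0-based) of `V^{⊗k}`. -/
noncomputable def siteOp {N : ℕ} (k : ℕ) (X : TwoSiteOp N) (p : ℕ) :
    Matrix (Fin k → Fin N) (Fin k → Fin N) ℂ :=
  if h : p + 1 < k then
    Matrix.of fun a b =>
      X (a ⟨p, Nat.lt_of_succ_lt h⟩, a ⟨p + 1, h⟩)
        (b ⟨p, Nat.lt_of_succ_lt h⟩, b ⟨p + 1, h⟩) *
      ∏ j : Fin k, if (j : ℕ) = p ∨ (j : ℕ) = p + 1 then 1
        else if a j = b j then 1 else 0
  else 1

/-- The braid relation `X₁X₂X₁ = X₂X₁X₂` on `V^{⊗3}`. -/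
def IsBraid {N : ℕ} (X : TwoSiteOp N) : Prop :=
  siteOp 3 X 0 * siteOp 3 X 1 * siteOp 3 X 0
    = siteOp 3 X 1 * siteOp 3 X 0 * siteOp 3 X 1

/-- `{R,F}` is a compatible pair: `R₁F₂F₁ = F₂F₁R₂`, `R₂F₁F₂ = F₁F₂R₁`. -/
def IsCompatiblePair {N : ℕ} (R F : TwoSiteOp N) : Prop :=
  siteOp 3 R 0 * siteOp 3 F 1 * siteOp 3 F 0
      = siteOp 3 F 1 * siteOp 3 F 0 * siteOp 3 R 1 ∧
  siteOp 3 R 1 * siteOp 3 F 0 * siteOp 3 F 1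
      = siteOp 3 F 0 * siteOp 3 F 1 * siteOp 3 R 0

/-- `Ψ` is a skew-inverse of `X`: `Σ_{a,b} X_{ia}^{kb} Ψ^{al}_{bj} = δ_i^l δ_j^k`. -/
def IsSkewInverse {N : ℕ} (X Ψ : TwoSiteOp N) : Prop :=
  ∀ i j k l : Fin N,
    ∑ a : Fin N, ∑ b : Fin N, X (k, b) (i, a) * Ψ (a, l) (b, j)
      = (if i = l then 1 else 0) * (if j = k then 1 else 0)

/-- `D^X = Tr_{(2)} Ψ^X`. -/
noncomputable def Dtr {N : ℕ} (Ψ : TwoSiteOp N) : Matrix (Fin N) (Fin N) ℂ :=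
  Matrix.of fun i j => ∑ a : Fin N, Ψ (j, a) (i, a)

/-- The Hecke condition `(R − q·Id)(R + q⁻¹·Id) = 0`. -/
def IsHeckeType {N : ℕ} (q : ℂ) (R : TwoSiteOp N) : Prop :=
  (R - q • (1 : TwoSiteOp N)) * (R + q⁻¹ • (1 : TwoSiteOp N)) = 0

section QMA

variable {N : ℕ} (𝒜 : Type*) [Ring 𝒜] [Algebra ℂ 𝒜]

/-- `X_p` with entries pushed into the algebra `𝒜`. -/
noncomputable def siteOpA (k : ℕ) (X : TwoSiteOp N) (p : ℕ) :
    Matrix (Fin k → Fin N) (Fin k → Fin N) 𝒜 :=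
  (siteOp k X p).map (algebraMap ℂ 𝒜)

/-- `M_{1̄} = M ⊗ Id^{⊗(k−1)}`: the matrix `M` placed on the first tensor factor. -/
noncomputable def genFirst (k : ℕ) (M : Matrix (Fin N) (Fin N) 𝒜) :
    Matrix (Fin k → Fin N) (Fin k → Fin N) 𝒜 :=
  Matrix.of fun a b =>
    if h : 0 < k then
      (if ∀ j, j ≠ ⟨0, h⟩ → a j = b j then M (a ⟨0, h⟩) (b ⟨0, h⟩) else 0)
    else 0

/-- The copies `M_{j+1‾}` of the matrix of generators: `copyM … 0 = M_{1̄}` and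
`M_{j+2‾} = F_{j+1} M_{j+1‾} F_{j+1}⁻¹` (`F_{j+1}` acting at 0-based position `j`). -/
noncomputable def copyM (k : ℕ) (F Finv : TwoSiteOp N)
    (M : Matrix (Fin N) (Fin N) 𝒜) :
    ℕ → Matrix (Fin k → Fin N) (Fin k → Fin N) 𝒜
  | 0 => genFirst 𝒜 k M
  | j + 1 => siteOpA 𝒜 k F j * copyM k F Finv M j * siteOpA 𝒜 k Finv j

/-- The product `M_{1̄} M_{2̄} ⋯ M_{t̄}`. -/
noncomputable def copyProd (k : ℕ) (F Finv : TwoSiteOp N)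
    (M : Matrix (Fin N) (Fin N) 𝒜) :
    ℕ → Matrix (Fin k → Fin N) (Fin k → Fin N) 𝒜
  | 0 => 1
  | j + 1 => copyProd k F Finv M j * copyM 𝒜 k F Finv M j

/-- The defining relation `R₁ M_{1̄} M_{2̄} = M_{1̄} M_{2̄} R₁` of the quantum
matrix algebra, imposed on a matrix `M` with entries in `𝒜`. -/
def QMARel (R F Finv : TwoSiteOp N) (M : Matrix (Fin N) (Fin N) 𝒜) : Prop :=
  siteOpA 𝒜 2 R 0 * copyM 𝒜 2 F Finv M 0 * copyM 𝒜 2 F Finv M 1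
    = copyM 𝒜 2 F Finv M 0 * copyM 𝒜 2 F Finv M 1 * siteOpA 𝒜 2 R 0

end QMA


/-! ### Auxiliary development -/

section Pads
variable {N k : ℕ} {S : Type*} [Ring S]

/-- Extend an operator on `V^{⊗k}` by identity on a new last factor. -/
noncomputable def padB (X : Matrix (Fin k → Fin N) (Fin k → Fin N) S) :
    Matrix (Fin (k+1) → Fin N) (Fin (k+1) → Fin N) S :=
  Matrix.of fun a b =>
    if a (Fin.last k) = b (Fin.last k) then
      X (fun i => a i.castSucc) (fun i => b i.castSucc) else 0

/-- Extend an operator on `V^{⊗k}` by identity on a new first factor. -/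
noncomputable def padF (X : Matrix (Fin k → Fin N) (Fin k → Fin N) S) :
    Matrix (Fin (k+1) → Fin N) (Fin (k+1) → Fin N) S :=
  Matrix.of fun a b =>
    if a 0 = b 0 then X (fun i => a i.succ) (fun i => b i.succ) else 0

lemma padB_one : padB (1 : Matrix (Fin k → Fin N) (Fin k → Fin N) S) = 1 := by
  ext a b
  simp only [padB, Matrix.of_apply, Matrix.one_apply]
  by_cases h : a = b
  · simp [h]
  · have : ¬ (a (Fin.last k) = b (Fin.last k) ∧
        (fun i : Fin k => a i.castSucc) = fun i => b i.castSucc) := by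
      intro ⟨h1, h2⟩
      apply h
      funext j
      cases j using Fin.lastCases with
      | last => exact h1
      | cast i => exact congrFun h2 i
    rcases not_and_or.mp this with h1 | h2
    · simp [h1, h]
    · simp [h2, h]

lemma padF_one : padF (1 : Matrix (Fin k → Fin N) (Fin k → Fin N) S) = 1 := by
  ext a b
  simp only [padF, Matrix.of_apply, Matrix.one_apply]
  by_cases h : a = b
  · simp [h]
  · have : ¬ (a 0 = b 0 ∧ (fun i : Fin k => a i.succ) = fun i => b i.succ) := by
      intro ⟨h1, h2⟩
      apply h
      funext j
      cases j using Fin.cases with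
      | zero => exact h1
      | succ i => exact congrFun h2 i
    rcases not_and_or.mp this with h1 | h2
    · simp [h1, h]
    · simp [h2, h]

lemma padB_mul (X Y : Matrix (Fin k → Fin N) (Fin k → Fin N) S) :
    padB (X * Y) = padB X * padB Y := by
  ext a b
  simp only [padB, Matrix.of_apply, Matrix.mul_apply]
  rw [← Equiv.sum_comp (Fin.snocEquiv (fun _ => Fin N))]
  rw [Fintype.sum_prod_type]
  simp only [Fin.snocEquiv, Equiv.coe_fn_mk, Fin.snoc_last, Fin.snoc_castSucc]
  rw [Finset.sum_comm]
  simp only [ite_mul, mul_ite, zero_mul, mul_zero]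
  by_cases h : a (Fin.last k) = b (Fin.last k) <;>
    simp [h, Finset.sum_ite_eq', Finset.sum_ite_eq]

lemma padF_mul (X Y : Matrix (Fin k → Fin N) (Fin k → Fin N) S) :
    padF (X * Y) = padF X * padF Y := by
  ext a b
  simp only [padF, Matrix.of_apply, Matrix.mul_apply]
  rw [← Equiv.sum_comp (Fin.consEquiv (fun _ => Fin N))]
  rw [Fintype.sum_prod_type]
  simp only [Fin.consEquiv, Equiv.coe_fn_mk, Fin.cons_zero, Fin.cons_succ]
  rw [Finset.sum_comm]
  simp only [ite_mul, mul_ite, zero_mul, mul_zero]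
  by_cases h : a 0 = b 0 <;>
    simp [h, Finset.sum_ite_eq', Finset.sum_ite_eq]

lemma padB_map {T : Type*} [Ring T] (f : S →+* T)
    (X : Matrix (Fin k → Fin N) (Fin k → Fin N) S) :
    padB (X.map f) = (padB X).map f := by
  ext a b
  simp only [padB, Matrix.of_apply, Matrix.map_apply, apply_ite f, map_zero]

lemma padF_map {T : Type*} [Ring T] (f : S →+* T)
    (X : Matrix (Fin k → Fin N) (Fin k → Fin N) S) :
    padF (X.map f) = (padF X).map f := by
  ext a b
  simp only [padF, Matrix.of_apply, Matrix.map_apply, apply_ite f, map_zero]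

end Pads

section SiteOpLemmas
variable {N : ℕ}

lemma padB_siteOp {k p : ℕ} (h : p + 1 < k) (X : TwoSiteOp N) :
    padB (siteOp k X p) = siteOp (k+1) X p := by
  have h' : p + 1 < k + 1 := h.trans (Nat.lt_succ_self k)
  ext a b
  simp only [padB, siteOp, dif_pos h, dif_pos h', Matrix.of_apply]
  rw [Fin.prod_univ_castSucc]
  have hlast : ¬ (((Fin.last k : Fin (k+1)) : ℕ) = p ∨
      ((Fin.last k : Fin (k+1)) : ℕ) = p + 1) := by
    simp [Fin.last]; omega
  rw [if_neg hlast]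
  have e1 : (Fin.castSucc ⟨p, Nat.lt_of_succ_lt h⟩ : Fin (k+1)) = ⟨p, Nat.lt_of_succ_lt h'⟩ := rfl
  have e2 : (Fin.castSucc ⟨p+1, h⟩ : Fin (k+1)) = ⟨p+1, h'⟩ := rfl
  by_cases hl : a (Fin.last k) = b (Fin.last k) <;> simp [hl, e1, e2]

lemma padF_siteOp {k p : ℕ} (h : p + 1 < k) (X : TwoSiteOp N) :
    padF (siteOp k X p) = siteOp (k+1) X (p+1) := by
  have h' : p + 1 + 1 < k + 1 := Nat.succ_lt_succ h
  ext a b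
  simp only [padF, siteOp, dif_pos h, dif_pos h', Matrix.of_apply]
  rw [Fin.prod_univ_succ]
  have h0 : ¬ (((0 : Fin (k+1)) : ℕ) = p + 1 ∨ ((0 : Fin (k+1)) : ℕ) = p + 1 + 1) := by
    simp
  rw [if_neg h0]
  have e1 : (Fin.succ ⟨p, Nat.lt_of_succ_lt h⟩ : Fin (k+1)) = ⟨p+1, Nat.lt_of_succ_lt h'⟩ := rfl
  have e2 : (Fin.succ ⟨p+1, h⟩ : Fin (k+1)) = ⟨p+1+1, h'⟩ := rfl
  have hsucc : ∀ (j : Fin k), ((j.succ : Fin (k+1)) : ℕ) = (j : ℕ) + 1 := fun j => rfl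
  by_cases hl : a 0 = b 0 <;> simp [hl, e1, e2, hsucc]

lemma siteOp_two (X : TwoSiteOp N) :
    siteOp 2 X 0 = Matrix.of fun a b => X (a 0, a 1) (b 0, b 1) := by
  ext a b
  have h : (0:ℕ) + 1 < 2 := by omega
  simp only [siteOp, dif_pos h, Matrix.of_apply, Fin.prod_univ_two]
  norm_num

lemma siteOp_two_mul (X Y : TwoSiteOp N) :
    siteOp 2 (X * Y) 0 = siteOp 2 X 0 * siteOp 2 Y 0 := by
  rw [siteOp_two, siteOp_two, siteOp_two]
  ext a b
  simp only [Matrix.mul_apply, Matrix.of_apply]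
  rw [← Equiv.sum_comp (finTwoArrowEquiv (Fin N)).symm]
  simp [finTwoArrowEquiv]

lemma siteOp_two_one : siteOp 2 (1 : TwoSiteOp N) 0 = 1 := by
  rw [siteOp_two]
  ext a b
  simp only [Matrix.of_apply, Matrix.one_apply]
  by_cases h : a = b
  · simp [h]
  · have : ¬ ((a 0, a 1) = (b 0, b 1)) := by
      intro hc
      apply h
      funext j
      fin_cases j
      · exact (Prod.mk.injEq _ _ _ _ ▸ hc).1
      · exact (Prod.mk.injEq _ _ _ _ ▸ hc).2
    simp [h, this]

lemma siteOp_mul : ∀ (k p : ℕ), p + 1 < k → ∀ X Y : TwoSiteOp N,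
    siteOp k (X * Y) p = siteOp k X p * siteOp k Y p := by
  intro k
  induction k with
  | zero => intro p hp; omega
  | succ k ih =>
    intro p hp X Y
    rcases Nat.lt_or_ge (p+1) k with hk | hk
    · rw [← padB_siteOp hk (X*Y), ← padB_siteOp hk X, ← padB_siteOp hk Y,
        ih p hk, padB_mul]
    · -- p + 1 = k
      have hpk : p + 1 = k := by omega
      cases p with
      | zero =>
        have hk2 : k = 1 := by omega
        subst hk2
        exact siteOp_two_mul X Y
      | succ q =>
        have hq : q + 1 < k := by omega
        rw [← padF_siteOp hq (X*Y), ← padF_siteOp hq X, ← padF_siteOp hq Y,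
          ih q hq, padF_mul]

lemma siteOp_one : ∀ (k p : ℕ), p + 1 < k → siteOp k (1 : TwoSiteOp N) p = 1 := by
  intro k
  induction k with
  | zero => intro p hp; omega
  | succ k ih =>
    intro p hp
    rcases Nat.lt_or_ge (p+1) k with hk | hk
    · rw [← padB_siteOp hk (1 : TwoSiteOp N), ih p hk, padB_one]
    · cases p with
      | zero =>
        have hk2 : k = 1 := by omega
        subst hk2
        exact siteOp_two_one
      | succ q =>
        have hq : q + 1 < k := by omega
        rw [← padF_siteOp hq (1 : TwoSiteOp N), ih q hq, padF_one]

end SiteOpLemmas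


section Local
variable {N k : ℕ}

/-- `A` acts only on the tensor factors in `S` (with an explicit witness). -/
def IsLocal {𝒜 : Type*} [Ring 𝒜] (S : Finset (Fin k))
    (A : Matrix (Fin k → Fin N) (Fin k → Fin N) 𝒜) : Prop :=
  ∃ f : ({x // x ∈ S} → Fin N) → ({x // x ∈ S} → Fin N) → 𝒜,
    ∀ a b, A a b =
      if ∀ j ∉ S, a j = b j then f (fun j => a j.1) (fun j => b j.1) else 0

/-- `IsLocal` with central entries. -/
def IsLocalCentral {𝒜 : Type*} [Ring 𝒜] (S : Finset (Fin k))
    (A : Matrix (Fin k → Fin N) (Fin k → Fin N) 𝒜) : Prop :=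
  ∃ f : ({x // x ∈ S} → Fin N) → ({x // x ∈ S} → Fin N) → 𝒜,
    (∀ a b, A a b =
      if ∀ j ∉ S, a j = b j then f (fun j => a j.1) (fun j => b j.1) else 0) ∧
    ∀ u v (x : 𝒜), Commute (f u v) x

lemma isLocal_siteOp {p : ℕ} (h : p + 1 < k) (X : TwoSiteOp N) :
    IsLocal ({⟨p, Nat.lt_of_succ_lt h⟩, ⟨p+1, h⟩} : Finset (Fin k)) (siteOp k X p) := by
  set S : Finset (Fin k) := {⟨p, Nat.lt_of_succ_lt h⟩, ⟨p+1, h⟩} with hS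
  have hmem1 : (⟨p, Nat.lt_of_succ_lt h⟩ : Fin k) ∈ S := by simp [hS]
  have hmem2 : (⟨p+1, h⟩ : Fin k) ∈ S := by simp [hS]
  have hSiff : ∀ j : Fin k, j ∈ S ↔ ((j : ℕ) = p ∨ (j : ℕ) = p + 1) := by
    intro j
    simp [hS, Finset.mem_insert, Finset.mem_singleton, Fin.ext_iff]
  refine ⟨fun u v => X (u ⟨_, hmem1⟩, u ⟨_, hmem2⟩) (v ⟨_, hmem1⟩, v ⟨_, hmem2⟩), ?_⟩
  intro a b
  simp only [siteOp, dif_pos h, Matrix.of_apply]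
  by_cases hc : ∀ j ∉ S, a j = b j
  · rw [if_pos hc]
    have : ∀ j : Fin k, (if (j : ℕ) = p ∨ (j : ℕ) = p + 1 then (1:ℂ)
        else if a j = b j then 1 else 0) = 1 := by
      intro j
      by_cases hj : (j : ℕ) = p ∨ (j : ℕ) = p + 1
      · rw [if_pos hj]
      · rw [if_neg hj, if_pos (hc j (fun hm => hj ((hSiff j).mp hm)))]
    rw [Finset.prod_congr rfl (fun j _ => this j), Finset.prod_const_one, mul_one]
  · rw [if_neg hc]
    push_neg at hc
    obtain ⟨j0, hj0S, hj0⟩ := hc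
    have hz : (if (j0 : ℕ) = p ∨ (j0 : ℕ) = p + 1 then (1:ℂ)
        else if a j0 = b j0 then 1 else 0) = 0 := by
      rw [if_neg (fun hm => hj0S ((hSiff j0).mpr hm)), if_neg hj0]
    rw [Finset.prod_eq_zero (Finset.mem_univ j0) hz, mul_zero]

lemma isLocal_map {𝒜 : Type*} [Ring 𝒜] (φ : ℂ →+* 𝒜) {S : Finset (Fin k)}
    {A : Matrix (Fin k → Fin N) (Fin k → Fin N) ℂ} (hA : IsLocal S A) :
    IsLocal S (A.map φ) := by
  obtain ⟨f, hf⟩ := hA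
  exact ⟨fun u v => φ (f u v), fun a b => by
    simp only [Matrix.map_apply, hf a b, apply_ite φ, map_zero]⟩

lemma isLocalCentral_of_map {𝒜 : Type*} [Ring 𝒜] [Algebra ℂ 𝒜] {S : Finset (Fin k)}
    {A : Matrix (Fin k → Fin N) (Fin k → Fin N) ℂ} (hA : IsLocal S A) :
    IsLocalCentral S (A.map (algebraMap ℂ 𝒜)) := by
  obtain ⟨f, hf⟩ := hA
  refine ⟨fun u v => algebraMap ℂ 𝒜 (f u v), fun a b => by
    simp only [Matrix.map_apply, hf a b, apply_ite (algebraMap ℂ 𝒜), map_zero], ?_⟩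
  intro u v x
  exact (Algebra.commutes (f u v) x)

lemma isLocal_genFirst {𝒜 : Type*} [Ring 𝒜] (h : 0 < k) (M : Matrix (Fin N) (Fin N) 𝒜) :
    IsLocal ({⟨0, h⟩} : Finset (Fin k)) (genFirst 𝒜 k M) := by
  have hmem : (⟨0, h⟩ : Fin k) ∈ ({⟨0, h⟩} : Finset (Fin k)) := Finset.mem_singleton_self _
  refine ⟨fun u v => M (u ⟨_, hmem⟩) (v ⟨_, hmem⟩), ?_⟩
  intro a b
  simp only [genFirst, Matrix.of_apply, dif_pos h]
  have : (∀ j, j ≠ (⟨0, h⟩ : Fin k) → a j = b j) ↔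
      (∀ j ∉ ({⟨0, h⟩} : Finset (Fin k)), a j = b j) := by
    simp [Finset.mem_singleton]
  rw [if_congr this rfl rfl]

lemma mul_comm_of_local {𝒜 : Type*} [Ring 𝒜] {S T : Finset (Fin k)}
    (hd : Disjoint S T) {A B : Matrix (Fin k → Fin N) (Fin k → Fin N) 𝒜}
    (hA : IsLocal S A) (hB : IsLocalCentral T B) :
    A * B = B * A := by
  obtain ⟨f, hf⟩ := hA
  obtain ⟨g, hg, hgc⟩ := hB
  ext a b
  rw [Matrix.mul_apply, Matrix.mul_apply]
  by_cases hφ : ∀ j, j ∉ S → j ∉ T → a j = b j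
  · -- both sides have a single nonvanishing term
    set c₀ : Fin k → Fin N := fun j => if j ∈ S then b j else a j with hc₀
    set c₁ : Fin k → Fin N := fun j => if j ∈ T then b j else a j with hc₁
    have hST : ∀ j, j ∈ S → j ∉ T := fun j hj => Finset.disjoint_left.mp hd hj
    have hTS : ∀ j, j ∈ T → j ∉ S := fun j hj => Finset.disjoint_right.mp hd hj
    rw [Finset.sum_eq_single_of_mem c₀ (Finset.mem_univ _), Finset.sum_eq_single_of_mem c₁ (Finset.mem_univ _)]
    · rw [hf a c₀, hg c₀ b, hg a c₁, hf c₁ b]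
      rw [if_pos (fun j hj => by simp [hc₀, if_neg hj]),
        if_pos (fun j hj => by
          by_cases hjS : j ∈ S
          · simp [hc₀, if_pos hjS]
          · simp only [hc₀, if_neg hjS]; exact hφ j hjS hj),
        if_pos (fun j hj => by simp [hc₁, if_neg hj]),
        if_pos (fun j hj => by
          by_cases hjT : j ∈ T
          · simp [hc₁, if_pos hjT]
          · simp only [hc₁, if_neg hjT]; exact hφ j hj hjT)]
      have e1 : (fun j : {x // x ∈ S} => c₀ j.1) = fun j => b j.1 := by
        funext j; simp [hc₀, if_pos j.2]
      have e2 : (fun j : {x // x ∈ T} => c₀ j.1) = fun j => a j.1 := by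
        funext j; simp [hc₀, if_neg (hTS j.1 j.2)]
      have e3 : (fun j : {x // x ∈ T} => c₁ j.1) = fun j => b j.1 := by
        funext j; simp [hc₁, if_pos j.2]
      have e4 : (fun j : {x // x ∈ S} => c₁ j.1) = fun j => a j.1 := by
        funext j; simp [hc₁, if_neg (hST j.1 j.2)]
      rw [e1, e2, e3, e4]
      exact (hgc (fun j => a j.1) (fun j => b j.1)
        (f (fun j => a j.1) (fun j => b j.1))).symm
    · -- other terms on the right vanish
      intro c _ hne
      by_cases h1 : ∀ j ∉ T, a j = c j
      · by_cases h2 : ∀ j ∉ S, c j = b j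
        · exfalso; apply hne; funext j
          by_cases hjT : j ∈ T
          · show c j = if j ∈ T then b j else a j
            rw [if_pos hjT]; exact h2 j (hTS j hjT)
          · simp [hc₁, if_neg hjT, (h1 j hjT).symm]
        · rw [hf c b, if_neg h2, mul_zero]
      · rw [hg a c, if_neg h1, zero_mul]
    · intro c _ hne
      by_cases h1 : ∀ j ∉ S, a j = c j
      · by_cases h2 : ∀ j ∉ T, c j = b j
        · exfalso; apply hne; funext j
          by_cases hjS : j ∈ S
          · simp [hc₀, if_pos hjS, h2 j (hST j hjS)]
          · simp [hc₀, if_neg hjS, (h1 j hjS).symm]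
        · rw [hg c b, if_neg h2, mul_zero]
      · rw [hf a c, if_neg h1, zero_mul]
  · -- both sides vanish
    push_neg at hφ
    rw [Finset.sum_eq_zero, Finset.sum_eq_zero]
    · intro c _
      by_cases h1 : ∀ j ∉ T, a j = c j
      · by_cases h2 : ∀ j ∉ S, c j = b j
        · exfalso
          obtain ⟨j, hjS, hjT, hab⟩ := hφ
          exact hab ((h1 j hjT).trans (h2 j hjS))
        · rw [hf c b, if_neg h2, mul_zero]
      · rw [hg a c, if_neg h1, zero_mul]
    · intro c _
      by_cases h1 : ∀ j ∉ S, a j = c j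
      · by_cases h2 : ∀ j ∉ T, c j = b j
        · exfalso
          obtain ⟨j, hjS, hjT, hab⟩ := hφ
          exact hab ((h1 j hjS).trans (h2 j hjT))
        · rw [hg c b, if_neg h2, mul_zero]
      · rw [hf a c, if_neg h1, zero_mul]

end Local


section More
variable {N : ℕ} {𝒜 : Type*} [Ring 𝒜] [Algebra ℂ 𝒜]

lemma siteOpA_mul {k p : ℕ} (h : p + 1 < k) (X Y : TwoSiteOp N) :
    siteOpA 𝒜 k (X * Y) p = siteOpA 𝒜 k X p * siteOpA 𝒜 k Y p := by
  unfold siteOpA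
  rw [siteOp_mul k p h, Matrix.map_mul]

lemma siteOpA_one {k p : ℕ} (h : p + 1 < k) :
    siteOpA 𝒜 k (1 : TwoSiteOp N) p = 1 := by
  unfold siteOpA
  rw [siteOp_one k p h]
  exact Matrix.map_one _ (map_zero _) (map_one _)

lemma padB_genFirst {k : ℕ} (h : 0 < k) (M : Matrix (Fin N) (Fin N) 𝒜) :
    padB (genFirst 𝒜 k M) = genFirst 𝒜 (k+1) M := by
  have h' : 0 < k + 1 := Nat.succ_pos k
  ext a b
  simp only [padB, genFirst, Matrix.of_apply, dif_pos h, dif_pos h']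
  have hiff : (∀ j : Fin (k+1), j ≠ ⟨0, h'⟩ → a j = b j) ↔
      (a (Fin.last k) = b (Fin.last k) ∧
        ∀ j : Fin k, j ≠ ⟨0, h⟩ → a j.castSucc = b j.castSucc) := by
    constructor
    · intro hj
      refine ⟨hj _ (by simp [Fin.ext_iff, Fin.last]; omega), fun j hj0 => hj _ ?_⟩
      simp only [ne_eq, Fin.ext_iff, Fin.coe_castSucc]
      simpa [Fin.ext_iff] using hj0
    · rintro ⟨h1, h2⟩ j hj0
      cases j using Fin.lastCases with
      | last => exact h1
      | cast i =>
        refine h2 i ?_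
        simp only [ne_eq, Fin.ext_iff] at hj0 ⊢
        simpa using hj0
  rw [if_congr hiff rfl rfl, ite_and, Fin.castSucc_mk]

end More


section WordHelpers
variable {A : Type*} [Monoid A]

lemma mul2_ext {a b c d : A} (h : a * b = c * d) : ∀ x, a * (b * x) = c * (d * x) :=
  fun x => by rw [← mul_assoc, ← mul_assoc, h]

lemma mul3_ext {a b c d e f : A} (h : a * b * c = d * e * f) :
    ∀ x, a * (b * (c * x)) = d * (e * (f * x)) :=
  fun x => by rw [← mul_assoc, ← mul_assoc, ← mul_assoc, ← mul_assoc, h]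

lemma cancel_ext {a b : A} (h : a * b = 1) : ∀ x, a * (b * x) = x :=
  fun x => by rw [← mul_assoc, h, one_mul]

end WordHelpers

section Shifts
variable {N : ℕ} {𝒜 : Type*} [Ring 𝒜] [Algebra ℂ 𝒜]

lemma padB_siteOpA {k p : ℕ} (h : p + 1 < k) (X : TwoSiteOp N) :
    padB (siteOpA 𝒜 k X p) = siteOpA 𝒜 (k+1) X p := by
  unfold siteOpA
  rw [padB_map, padB_siteOp h]

lemma padB_copyM {k : ℕ} (F Finv : TwoSiteOp N) (M : Matrix (Fin N) (Fin N) 𝒜) :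
    ∀ i, i < k → padB (copyM 𝒜 k F Finv M i) = copyM 𝒜 (k+1) F Finv M i := by
  intro i
  induction i with
  | zero =>
    intro h
    show padB (genFirst 𝒜 k M) = genFirst 𝒜 (k+1) M
    exact padB_genFirst h M
  | succ i ih =>
    intro h
    show padB (siteOpA 𝒜 k F i * copyM 𝒜 k F Finv M i * siteOpA 𝒜 k Finv i) = _
    rw [padB_mul, padB_mul, padB_siteOpA h, padB_siteOpA h, ih (by omega)]
    rfl

lemma braid_shift {F : TwoSiteOp N} (hbF : IsBraid F) :
    ∀ j : ℕ, siteOp (j+3) F j * siteOp (j+3) F (j+1) * siteOp (j+3) F j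
      = siteOp (j+3) F (j+1) * siteOp (j+3) F j * siteOp (j+3) F (j+1) := by
  intro j
  induction j with
  | zero => exact hbF
  | succ j ih =>
    have h1 : j + 1 < j + 3 := by omega
    have h2 : j + 1 + 1 < j + 3 := by omega
    have := congrArg padF ih
    rw [padF_mul, padF_mul, padF_mul, padF_mul, padF_siteOp h1, padF_siteOp h2] at this
    exact this

lemma compat2_shift {R F : TwoSiteOp N}
    (hc : siteOp 3 R 1 * siteOp 3 F 0 * siteOp 3 F 1
      = siteOp 3 F 0 * siteOp 3 F 1 * siteOp 3 R 0) :
    ∀ j : ℕ, siteOp (j+3) R (j+1) * siteOp (j+3) F j * siteOp (j+3) F (j+1)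
      = siteOp (j+3) F j * siteOp (j+3) F (j+1) * siteOp (j+3) R j := by
  intro j
  induction j with
  | zero => exact hc
  | succ j ih =>
    have h1 : j + 1 < j + 3 := by omega
    have h2 : j + 1 + 1 < j + 3 := by omega
    have := congrArg padF ih
    rw [padF_mul, padF_mul, padF_mul, padF_mul] at this
    simp only [padF_siteOp h1, padF_siteOp h2] at this
    exact this

lemma braid_shiftA {F : TwoSiteOp N} (hbF : IsBraid F) (j : ℕ) :
    siteOpA 𝒜 (j+3) F j * siteOpA 𝒜 (j+3) F (j+1) * siteOpA 𝒜 (j+3) F j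
      = siteOpA 𝒜 (j+3) F (j+1) * siteOpA 𝒜 (j+3) F j * siteOpA 𝒜 (j+3) F (j+1) := by
  unfold siteOpA
  rw [← Matrix.map_mul, ← Matrix.map_mul, ← Matrix.map_mul, ← Matrix.map_mul,
    braid_shift hbF j]

lemma compat2_shiftA {R F : TwoSiteOp N}
    (hc : siteOp 3 R 1 * siteOp 3 F 0 * siteOp 3 F 1
      = siteOp 3 F 0 * siteOp 3 F 1 * siteOp 3 R 0) (j : ℕ) :
    siteOpA 𝒜 (j+3) R (j+1) * siteOpA 𝒜 (j+3) F j * siteOpA 𝒜 (j+3) F (j+1)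
      = siteOpA 𝒜 (j+3) F j * siteOpA 𝒜 (j+3) F (j+1) * siteOpA 𝒜 (j+3) R j := by
  unfold siteOpA
  rw [← Matrix.map_mul, ← Matrix.map_mul, ← Matrix.map_mul, ← Matrix.map_mul,
    compat2_shift hc j]

lemma copyM_comm_site {k : ℕ} (F Finv : TwoSiteOp N) (M : Matrix (Fin N) (Fin N) 𝒜) :
    ∀ (i p : ℕ), i + 1 ≤ p → p + 1 < k → ∀ X : TwoSiteOp N,
      copyM 𝒜 k F Finv M i * siteOpA 𝒜 k X p
        = siteOpA 𝒜 k X p * copyM 𝒜 k F Finv M i := by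
  intro i
  induction i with
  | zero =>
    intro p hp hpk X
    have h0 : 0 < k := by omega
    show genFirst 𝒜 k M * siteOpA 𝒜 k X p = siteOpA 𝒜 k X p * genFirst 𝒜 k M
    refine mul_comm_of_local ?_ (isLocal_genFirst h0 M)
      (isLocalCentral_of_map (isLocal_siteOp hpk X))
    rw [Finset.disjoint_left]
    intro x hx hx'
    simp only [Finset.mem_singleton, Finset.mem_insert, Fin.ext_iff] at hx hx'
    omega
  | succ i ih =>
    intro p hp hpk X
    have hik : i + 1 < k := by omega
    have hd : Disjoint ({⟨i, Nat.lt_of_succ_lt hik⟩, ⟨i+1, hik⟩} : Finset (Fin k))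
        ({⟨p, Nat.lt_of_succ_lt hpk⟩, ⟨p+1, hpk⟩} : Finset (Fin k)) := by
      rw [Finset.disjoint_left]
      intro x hx hx'
      simp only [Finset.mem_singleton, Finset.mem_insert, Fin.ext_iff] at hx hx'
      omega
    have c1 : siteOpA 𝒜 k F i * siteOpA 𝒜 k X p = siteOpA 𝒜 k X p * siteOpA 𝒜 k F i :=
      mul_comm_of_local hd (isLocal_map _ (isLocal_siteOp hik F))
        (isLocalCentral_of_map (isLocal_siteOp hpk X))
    have c2 : siteOpA 𝒜 k Finv i * siteOpA 𝒜 k X p = siteOpA 𝒜 k X p * siteOpA 𝒜 k Finv i :=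
      mul_comm_of_local hd (isLocal_map _ (isLocal_siteOp hik Finv))
        (isLocalCentral_of_map (isLocal_siteOp hpk X))
    have c3 := ih p (by omega) hpk X
    show siteOpA 𝒜 k F i * copyM 𝒜 k F Finv M i * siteOpA 𝒜 k Finv i * siteOpA 𝒜 k X p
      = siteOpA 𝒜 k X p * (siteOpA 𝒜 k F i * copyM 𝒜 k F Finv M i * siteOpA 𝒜 k Finv i)
    have ca : Commute (siteOpA 𝒜 k F i) (siteOpA 𝒜 k X p) := c1
    have cm : Commute (copyM 𝒜 k F Finv M i) (siteOpA 𝒜 k X p) := c3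
    have cg : Commute (siteOpA 𝒜 k Finv i) (siteOpA 𝒜 k X p) := c2
    exact ((ca.mul_left cm).mul_left cg)

end Shifts

/-- In the quantum matrix algebra `M(R,F)` (here: for any ℂ-algebra `𝒜` and any
matrix `M` over `𝒜` satisfying the defining relation `R₁M_{1̄}M_{2̄} = M_{1̄}M_{2̄}R₁`),
the relations `R_k M_{k̄} M_{k+1‾} = M_{k̄} M_{k+1‾} R_k` hold for all `k ≥ 1`
(below `j = k − 1` is the 0-based index, in the space `V^{⊗(j+2)}`). -/
theorem copyM_commutation {N : ℕ} (𝒜 : Type*) [Ring 𝒜] [Algebra ℂ 𝒜]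
    (R F Finv ΨR ΨF ΨRf : TwoSiteOp N) (Rinv : TwoSiteOp N)
    (DRinv DFinv : Matrix (Fin N) (Fin N) ℂ)
    (hbR : IsBraid R) (hbF : IsBraid F) (hcomp : IsCompatiblePair R F)
    (hR : R * Rinv = 1) (hR' : Rinv * R = 1)
    (hF : F * Finv = 1) (hF' : Finv * F = 1)
    (hΨR : IsSkewInverse R ΨR) (hΨF : IsSkewInverse F ΨF)
    (hstrictR : Dtr ΨR * DRinv = 1 ∧ DRinv * Dtr ΨR = 1)
    (hstrictF : Dtr ΨF * DFinv = 1 ∧ DFinv * Dtr ΨF = 1)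
    (hΨRf : IsSkewInverse (Finv * Rinv * F) ΨRf)
    (M : Matrix (Fin N) (Fin N) 𝒜) (hQMA : QMARel 𝒜 R F Finv M) :
    ∀ j : ℕ,
      siteOpA 𝒜 (j + 2) R j * copyM 𝒜 (j + 2) F Finv M j
          * copyM 𝒜 (j + 2) F Finv M (j + 1)
        = copyM 𝒜 (j + 2) F Finv M j * copyM 𝒜 (j + 2) F Finv M (j + 1)
          * siteOpA 𝒜 (j + 2) R j := by
  intro j
  induction j with
  | zero => exact hQMA
  | succ j ih =>
    show siteOpA 𝒜 (j+3) R (j+1) * copyM 𝒜 (j+3) F Finv M (j+1)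
        * copyM 𝒜 (j+3) F Finv M (j+2)
      = copyM 𝒜 (j+3) F Finv M (j+1) * copyM 𝒜 (j+3) F Finv M (j+2)
        * siteOpA 𝒜 (j+3) R (j+1)
    have h1 : j + 1 < j + 3 := by omega
    have h2 : j + 1 + 1 < j + 3 := by omega
    set f := siteOpA 𝒜 (j+3) F j with hf_def
    set f' := siteOpA 𝒜 (j+3) F (j+1) with hf'_def
    set g := siteOpA 𝒜 (j+3) Finv j with hg_def
    set g' := siteOpA 𝒜 (j+3) Finv (j+1) with hg'_def
    set r := siteOpA 𝒜 (j+3) R (j+1) with hr_def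
    set r0 := siteOpA 𝒜 (j+3) R j with hr0_def
    set m := copyM 𝒜 (j+3) F Finv M j with hm_def
    have hm2 : copyM 𝒜 (j+3) F Finv M (j+1) = f * m * g := rfl
    have hm3 : copyM 𝒜 (j+3) F Finv M (j+2) = f' * (f * m * g) * g' := by
      show f' * copyM 𝒜 (j+3) F Finv M (j+1) * g' = _
      rw [hm2]
    -- unit relations
    have hfg : f * g = 1 := by
      rw [hf_def, hg_def, ← siteOpA_mul h1, hF, siteOpA_one h1]
    have hgf : g * f = 1 := by
      rw [hf_def, hg_def, ← siteOpA_mul h1, hF', siteOpA_one h1]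
    have hf'g' : f' * g' = 1 := by
      rw [hf'_def, hg'_def, ← siteOpA_mul h2, hF, siteOpA_one h2]
    have hg'f' : g' * f' = 1 := by
      rw [hf'_def, hg'_def, ← siteOpA_mul h2, hF', siteOpA_one h2]
    have Hfg := cancel_ext hfg
    have Hgf := cancel_ext hgf
    have Hf'g' := cancel_ext hf'g'
    have Hg'f' := cancel_ext hg'f'
    -- braid and compatibility, shifted
    have hbraid : f * f' * f = f' * f * f' := by
      rw [hf_def, hf'_def]; exact braid_shiftA hbF j
    have hcompat : r * f * f' = f * f' * r0 := by
      rw [hr_def, hf_def, hf'_def, hr0_def]; exact compat2_shiftA hcomp.2 j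
    have Hbraid := mul3_ext hbraid
    have Hcompat := mul3_ext hcompat
    -- commutation of m with the site-(j+1) operators
    have hmf'raw : m * f' = f' * m := by
      rw [hm_def, hf'_def]; exact copyM_comm_site F Finv M j (j+1) (le_refl _) h2 F
    have hmg'raw : m * g' = g' * m := by
      rw [hm_def, hg'_def]; exact copyM_comm_site F Finv M j (j+1) (le_refl _) h2 Finv
    have Hmf' := mul2_ext hmf'raw
    have Hg'm := mul2_ext hmg'raw.symm
    -- padded induction hypothesis
    have ihp := congrArg padB ih
    rw [padB_mul, padB_mul, padB_mul, padB_mul] at ihp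
    rw [padB_siteOpA (by omega : j + 1 < j + 2),
      padB_copyM F Finv M j (by omega), padB_copyM F Finv M (j+1) (by omega)] at ihp
    have ihp' : r0 * m * (f * m * g) = m * (f * m * g) * r0 := by
      rw [hr0_def, hm_def, ← hm2]; exact ihp
    have Hih : ∀ x, r0 * (m * (f * (m * (g * x)))) = m * (f * (m * (g * (r0 * x)))) := by
      intro x
      have := mul3_ext ihp' x
      simpa only [mul_assoc] using this
    -- key derived word rewrites
    have hbr1 : ∀ x, g * (f' * (f * x)) = f' * (f * (g' * x)) := by
      intro x
      have e1 : f * (f' * (f * (g' * x))) = f' * (f * x) := by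
        rw [Hbraid (g' * x), Hf'g']
      calc g * (f' * (f * x)) = g * (f * (f' * (f * (g' * x)))) := by rw [e1]
        _ = f' * (f * (g' * x)) := Hgf _
    have hinv : ∀ x, f' * (f * (f' * (g * (g' * (g * x))))) = x := by
      intro x
      rw [← Hbraid (g * (g' * (g * x))), Hfg, Hf'g', Hfg]
    have Hgg : ∀ x, g' * (g * (g' * x)) = g * (g' * (g * x)) := by
      intro x
      calc g' * (g * (g' * x))
          = g' * (g * (g' * (f' * (f * (f' * (g * (g' * (g * x)))))))) := by rw [hinv]
        _ = g * (g' * (g * x)) := by rw [Hg'f', Hgf, Hg'f']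
    have hggbare : g' * (g * g') = g * (g' * g) := by
      simpa only [mul_one] using Hgg 1
    have hrid : ∀ x, r * x = f * (f' * (r0 * (g' * (g * x)))) := by
      intro x
      calc r * x = r * (f * (f' * (g' * (g * x)))) := by rw [Hf'g', Hfg]
        _ = f * (f' * (r0 * (g' * (g * x)))) := Hcompat _
    have hrg : ∀ x, g' * (g * (r * x)) = r0 * (g' * (g * x)) := by
      intro x
      rw [hrid x, Hgf, Hg'f']
    have hrgbare : g' * (g * r) = r0 * (g' * g) := by
      simpa only [mul_one] using hrg 1
    -- the main computation
    rw [hm2, hm3]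
    simp only [mul_assoc]
    rw [hbr1, hbr1, Hmf', Hmf', Hg'm, Hg'm, hggbare, Hgg, hrgbare, Hcompat, Hih]
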